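/- arXiv:1404.7062 — 9 statements merged into one kernel-verified Lean document; each statement's English description precedes it below -/
import Mathlib

section
/- For the follow-the-leader ODE system with N+1 ordered particles x_0 < ... < x_N on the real line, where the leader satisfies x_N' = v(0) and each other particle satisfies x_i' = v(ℓ/(x_{i+1} - x_i)) for a C¹ strictly decreasing velocity v, if the initial spacings satisfy x_{i+1}(0) - x_i(0) ≥ ℓ/R for some R > 0, then for all t ≥ 0 and all i, x_{i+1}(t) - x_i(t) ≥ ℓ/R. -/
/-!
By downward induction from the leader: once the gap ahead of particle `j + 1` is at least `ℓ / R`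
(or `j + 1` is the leader), particle `j + 1` moves with speed at least `v R`. The gap `g` behind it
then satisfies `g' ≥ v R - v (ℓ / g)`, which is strictly positive whenever `0 < g < ℓ / R`, because
`v` is strictly decreasing. So `g` can never cross below `ℓ / R`.
-/

open Set

theorem le_image_of_deriv_pos_of_mem_Ioo {g g' : ℝ → ℝ} {a c : ℝ} (hac : a < c)
    (hg : ∀ t ≥ 0, HasDerivAt g (g' t) t) (h0 : c ≤ g 0)
    (hpos : ∀ t ≥ 0, g t ∈ Ioo a c → 0 < g' t) :
    ∀ t ≥ 0, c ≤ g t := by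
  intro t ht
  have above_barrier : ∀ c' ∈ Ioo a c, c' ≤ g t := by
    rintro c' ⟨hac', hc'c⟩
    have fence := image_le_of_deriv_right_lt_deriv_boundary (f := fun s => -g s)
      (f' := fun s => -g' s) (B := fun _ => -c') (B' := fun _ => 0) (a := 0) (b := t)
      (fun s hs => (hg s hs.1).neg.continuousAt.continuousWithinAt)
      (fun s hs => (hg s hs.1).neg.hasDerivWithinAt) (by linarith)
      (fun _ => hasDerivAt_const _ _)
      (fun s hs heq => neg_neg_of_pos (hpos s hs.1 ⟨by linarith, by linarith⟩))
      ⟨ht, le_rfl⟩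
    linarith
  refine le_of_forall_lt fun b hb => ?_
  obtain ⟨c', hc', hc'c⟩ := exists_between (max_lt hac hb)
  calc b ≤ max a b := le_max_right a b
    _ < c' := hc'
    _ ≤ g t := above_barrier c' ⟨(le_max_left a b).trans_lt hc', hc'c⟩

theorem le_apply_div_of_div_le {v : ℝ → ℝ} {ℓ R d : ℝ} (hℓ : 0 < ℓ) (hR : 0 < R)
    (hv : AntitoneOn v (Ici 0)) (hd : ℓ / R ≤ d) : v R ≤ v (ℓ / d) := by
  have hd_pos := (div_pos hℓ hR).trans_le hd
  exact hv (mem_Ici.2 (div_pos hℓ hd_pos).le) (mem_Ici.2 hR.le) ((div_le_comm₀ hR hd_pos).1 hd)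

theorem le_gap_of_le_deriv_leader {v : ℝ → ℝ} {ℓ R : ℝ} (hℓ : 0 < ℓ) (hR : 0 < R)
    (hv : StrictAntiOn v (Ici 0)) {y z : ℝ → ℝ}
    (hy : ∀ t ≥ 0, HasDerivAt y (v (ℓ / (z t - y t))) t)
    (hz : ∀ t ≥ 0, DifferentiableAt ℝ z t) (hz' : ∀ t ≥ 0, v R ≤ deriv z t)
    (h0 : ℓ / R ≤ z 0 - y 0) :
    ∀ t ≥ 0, ℓ / R ≤ z t - y t := by
  refine le_image_of_deriv_pos_of_mem_Ioo (div_pos hℓ hR)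
    (fun t ht => (hz t ht).hasDerivAt.sub (hy t ht)) h0 ?_
  rintro t ht ⟨hgap_pos, hgap_lt⟩
  have hRlt : R < ℓ / (z t - y t) := by rwa [lt_div_comm₀ hR hgap_pos]
  have := hv (mem_Ici.2 hR.le) (mem_Ici.2 (hR.le.trans hRlt.le)) hRlt
  linarith [hz' t ht]

theorem ftl_discrete_max_principle_general
    (N : ℕ) (v : ℝ → ℝ) (ℓ R : ℝ)
    (hℓ : 0 < ℓ) (hR : 0 < R)
    (hv_anti : StrictAntiOn v (Set.Ici 0))
    (x : ℕ → ℝ → ℝ)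
    (hODE_leader : ∀ t ≥ (0:ℝ), HasDerivAt (x N) (v 0) t)
    (hODE : ∀ i < N, ∀ t ≥ (0:ℝ),
      HasDerivAt (x i) (v (ℓ / (x (i + 1) t - x i t))) t)
    (hInit : ∀ i < N, x (i + 1) 0 - x i 0 ≥ ℓ / R) :
    ∀ t ≥ (0:ℝ), ∀ i < N, x (i + 1) t - x i t ≥ ℓ / R := by
  have step : ∀ j < N, (j + 1 < N → ∀ t ≥ 0, ℓ / R ≤ x (j + 2) t - x (j + 1) t) →
      ∀ t ≥ 0, ℓ / R ≤ x (j + 1) t - x j t := by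
    intro j hj hnext
    have leader_speed : ∀ t ≥ 0, ∃ w, HasDerivAt (x (j + 1)) w t ∧ v R ≤ w := by
      intro t ht
      rcases (Nat.succ_le_of_lt hj).eq_or_lt with hleader | hfollower
      · refine ⟨v 0, by rw [show j + 1 = N from hleader]; exact hODE_leader t ht, ?_⟩
        exact hv_anti.antitoneOn (mem_Ici.2 le_rfl) (mem_Ici.2 hR.le) hR.le
      · exact ⟨_, hODE (j + 1) hfollower t ht,
          le_apply_div_of_div_le hℓ hR hv_anti.antitoneOn (hnext hfollower t ht)⟩
    refine le_gap_of_le_deriv_leader hℓ hR hv_anti (hODE j hj) (fun t ht => ?_) (fun t ht => ?_)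
      (hInit j hj)
    · obtain ⟨w, hw, -⟩ := leader_speed t ht
      exact hw.differentiableAt
    · obtain ⟨w, hw, hvw⟩ := leader_speed t ht
      rwa [hw.deriv]
  intro t ht i hi
  exact Nat.decreasingInduction
    (motive := fun m _ => m < N → ∀ t ≥ 0, ℓ / R ≤ x (m + 1) t - x m t)
    (fun k hk ih _ => step k hk ih) (fun h => absurd h (lt_irrefl N)) hi.le hi t ht

/-- Discrete maximum principle (lower spacing bound) for the follow-the-leader system. -/
theorem ftl_discrete_max_principle
    (N : ℕ) (v : ℝ → ℝ) (ℓ R : ℝ)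
    (hℓ : 0 < ℓ) (hR : 0 < R)
    (hv_smooth : ContDiffOn ℝ 1 v (Set.Ici 0))
    (hv_anti : StrictAntiOn v (Set.Ici 0))
    (x : ℕ → ℝ → ℝ)
    (hOrder : ∀ i < N, x i 0 < x (i + 1) 0)
    (hODE_leader : ∀ t ≥ (0:ℝ), HasDerivAt (x N) (v 0) t)
    (hODE : ∀ i < N, ∀ t ≥ (0:ℝ),
      HasDerivAt (x i) (v (ℓ / (x (i + 1) t - x i t))) t)
    (hInit : ∀ i < N, x (i + 1) 0 - x i 0 ≥ ℓ / R) :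
    ∀ t ≥ (0:ℝ), ∀ i < N, x (i + 1) t - x i t ≥ ℓ / R :=
  ftl_discrete_max_principle_general N v ℓ R hℓ hR hv_anti x hODE_leader hODE hInit
end

section
/- Let y_0, ..., y_{N-1} : [0,∞) → (0, ∞) solve the discrete density system y_{N-1}' = -(y_{N-1}²/ℓ)(v(0) - v(y_{N-1})) and y_i' = -(y_i²/ℓ)(v(y_{i+1}) - v(y_i)) for i = 0,...,N-2, with initial data bounded above by R, where v is C¹ strictly decreasing. Then y_i(t) ≤ R for all t ≥ 0 and all i. -/
open Set Filter Finset Topology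

/-- Discrete maximum principle in Lagrangian coordinates: the discrete densities
stay below their initial upper bound `R`. -/
theorem lagrangian_discrete_max_principle
    (N : ℕ) (hN : 1 ≤ N) (v : ℝ → ℝ) (ℓ R : ℝ)
    (hℓ : 0 < ℓ) (hR : 0 < R)
    (hv_smooth : ContDiffOn ℝ 1 v (Set.Ici 0))
    (hv_anti : StrictAntiOn v (Set.Ici 0))
    (y : ℕ → ℝ → ℝ)
    (hpos : ∀ i < N, ∀ t ≥ (0:ℝ), 0 < y i t)
    (hODE_last : ∀ t ≥ (0:ℝ),
      HasDerivAt (y (N - 1))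
        (-(y (N - 1) t) ^ 2 / ℓ * (v 0 - v (y (N - 1) t))) t)
    (hODE : ∀ i, i + 1 < N → ∀ t ≥ (0:ℝ),
      HasDerivAt (y i)
        (-(y i t) ^ 2 / ℓ * (v (y (i + 1) t) - v (y i t))) t)
    (hInit : ∀ i < N, y i 0 ≤ R) :
    ∀ t ≥ (0:ℝ), ∀ i < N, y i t ≤ R := by
  have hne : (Finset.range N).Nonempty := Finset.nonempty_range_iff.mpr (by omega)
  -- the "neighbor" value and the RHS of the ODE
  set W : ℕ → ℝ → ℝ := fun i t => if i + 1 < N then y (i + 1) t else 0 with hW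
  set D : ℕ → ℝ → ℝ := fun i t => -(y i t) ^ 2 / ℓ * (v (W i t) - v (y i t)) with hDdef
  have hD : ∀ i < N, ∀ t ≥ (0:ℝ), HasDerivAt (y i) (D i t) t := by
    intro i hi t ht
    by_cases h : i + 1 < N
    · simpa [hDdef, hW, h] using hODE i h t ht
    · have hi' : i = N - 1 := by omega
      subst hi'
      simpa [hDdef, hW, h] using hODE_last t ht
  -- the running maximum
  set f : ℝ → ℝ := fun t => (Finset.range N).sup' hne fun i => y i t with hf
  have hfc : ∀ t ≥ (0:ℝ), ContinuousAt f t := by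
    intro t ht
    exact ContinuousAt.finset_sup'_apply hne fun i hi =>
      (hD i (Finset.mem_range.mp hi) t ht).continuousAt
  -- nonemptiness of the argmax set
  have hAne : ∀ x : ℝ,
      ((Finset.range N).filter (fun i => y i x = f x)).Nonempty := by
    intro x
    obtain ⟨j, hj, hjx⟩ := Finset.exists_mem_eq_sup' hne (fun i => y i x)
    exact ⟨j, Finset.mem_filter.mpr ⟨hj, hjx.symm⟩⟩
  set f' : ℝ → ℝ := fun x =>
    ((Finset.range N).filter (fun i => y i x = f x)).sup' (hAne x) (fun i => D i x)
    with hf'def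
  -- the key barrier estimate
  have key : ∀ ε > (0:ℝ), ∀ T ≥ (0:ℝ), ∀ x ∈ Icc (0:ℝ) T, f x ≤ R + ε + ε * x := by
    intro ε hε T hT
    have hB : ∀ x : ℝ, HasDerivAt (fun x => R + ε + ε * x) ε x := by
      intro x
      simpa using ((hasDerivAt_id x).const_mul ε).const_add (R + ε)
    refine image_le_of_liminf_slope_right_lt_deriv_boundary
      (f' := f') (B' := fun _ => ε) ?_ ?_ ?_ hB ?_
    · -- continuity of f on [0, T]
      intro x hx
      exact (hfc x hx.1).continuousWithinAt
    · -- liminf slope bound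
      intro x hx r hr
      have hx0 : (0:ℝ) ≤ x := hx.1
      have H1 : ∀ j ∈ Finset.range N,
          ∀ᶠ z in 𝓝[>] x, y j z < f x + r * (z - x) := by
        intro j hj
        have hjN : j < N := Finset.mem_range.mp hj
        by_cases hjA : y j x = f x
        · -- j attains the max: use the derivative bound
          have hDj : D j x ≤ f' x :=
            Finset.le_sup' (fun i => D i x)
              (Finset.mem_filter.mpr ⟨hj, hjA⟩)
          have hDr : D j x < r := lt_of_le_of_lt hDj hr
          have hslope : Tendsto (slope (y j) x) (𝓝[≠] x) (𝓝 (D j x)) :=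
            hasDerivAt_iff_tendsto_slope.mp (hD j hjN x hx0)
          have hslope' : Tendsto (slope (y j) x) (𝓝[>] x) (𝓝 (D j x)) :=
            hslope.mono_left (nhdsWithin_mono x fun z hz => ne_of_gt hz)
          have hev : ∀ᶠ z in 𝓝[>] x, slope (y j) x z < r :=
            hslope' (Iio_mem_nhds hDr)
          filter_upwards [hev, self_mem_nhdsWithin] with z hz hzx
          have hzx' : (0:ℝ) < z - x := sub_pos.mpr hzx
          rw [slope_def_field, div_lt_iff₀ hzx'] at hz
          rw [← hjA]
          linarith
        · -- j does not attain the max: use continuity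
          have hjlt : y j x < f x :=
            lt_of_le_of_ne (Finset.le_sup' (fun i => y i x) hj) hjA
          have hcont : ContinuousAt (fun z => y j z - r * (z - x)) x := by
            exact ((hD j hjN x hx0).continuousAt).sub
              (by fun_prop)
          have : ∀ᶠ z in 𝓝 x, y j z - r * (z - x) < f x :=
            hcont.eventually_lt_const (by simpa using hjlt)
          filter_upwards [nhdsWithin_le_nhds this] with z hz
          linarith
      have H2 : ∀ᶠ z in 𝓝[>] x, ∀ j ∈ Finset.range N, y j z < f x + r * (z - x) :=
        eventually_all_finset (Finset.range N) |>.mpr H1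
      have H3 : ∀ᶠ z in 𝓝[>] x, slope f x z < r := by
        filter_upwards [H2, self_mem_nhdsWithin] with z hz hzx
        have hzx' : (0:ℝ) < z - x := sub_pos.mpr hzx
        have hfz : f z < f x + r * (z - x) :=
          (Finset.sup'_lt_iff hne).mpr fun i hi => hz i hi
        rw [slope_def_field, div_lt_iff₀ hzx']
        linarith
      exact H3.frequently
    · -- initial condition
      refine le_trans (Finset.sup'_le hne _ fun i hi => hInit i (Finset.mem_range.mp hi)) ?_
      nlinarith
    · -- the bound at touching points
      intro x hx hfx
      have hx0 : (0:ℝ) ≤ x := hx.1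
      refine (Finset.sup'_lt_iff (hAne x)).mpr fun j hj => ?_
      obtain ⟨hjr, hjA⟩ := Finset.mem_filter.mp hj
      have hjN : j < N := Finset.mem_range.mp hjr
      have hyj0 : 0 < y j x := hpos j hjN x hx0
      have hWle : W j x ≤ y j x := by
        by_cases h : j + 1 < N
        · simp only [hW, if_pos h]
          calc y (j + 1) x ≤ f x :=
                Finset.le_sup' (fun i => y i x) (Finset.mem_range.mpr h)
            _ = y j x := hjA.symm
        · simp only [hW, if_neg h]; exact hyj0.le
      have hW0 : (0:ℝ) ≤ W j x := by
        by_cases h : j + 1 < N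
        · simp only [hW, if_pos h]; exact (hpos (j + 1) h x hx0).le
        · simp only [hW, if_neg h]; exact le_rfl
      have hv : v (y j x) ≤ v (W j x) :=
        hv_anti.antitoneOn hW0 (le_trans hW0 hWle) hWle
      have hD0 : D j x ≤ 0 := by
        have h1 : -(y j x) ^ 2 / ℓ ≤ 0 := by rw [neg_div, neg_nonpos]; positivity
        have h2 : (0:ℝ) ≤ v (W j x) - v (y j x) := by linarith
        exact mul_nonpos_of_nonpos_of_nonneg h1 h2
      exact lt_of_le_of_lt hD0 hε
  -- conclude
  intro t ht i hi
  have hle : ∀ ε > (0:ℝ), y i t ≤ R + ε + ε * t := by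
    intro ε hε
    calc y i t ≤ f t := Finset.le_sup' (fun j => y j t) (Finset.mem_range.mpr hi)
      _ ≤ R + ε + ε * t := key ε hε t ht t ⟨ht, le_rfl⟩
  by_contra hcon
  push_neg at hcon
  have h1t : (0:ℝ) < 1 + t := by linarith
  have := hle ((y i t - R) / (2 * (1 + t))) (div_pos (by linarith) (by linarith))
  have h2 : (y i t - R) / (2 * (1 + t)) * (1 + t) = (y i t - R) / 2 := by
    field_simp
  nlinarith [this]
end

section
/- For the discrete density system y_i' = -(y_i²/ℓ)(v(y_{i+1}) - v(y_i)) (i ≤ N-2) and y_{N-1}' = -(y_{N-1}²/ℓ)(v(0) - v(y_{N-1})), with v C¹ strictly decreasing, the discrete total variation TV(t) = y_0(t) + y_{N-1}(t) + Σ_{i=0}^{N-2} |y_i(t) - y_{i+1}(t)| is non-increasing in time. -/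
/-!
Pad the sequence by a zero on each side, `Y = (0, y₀, …, y_{N-1}, 0)`, so that the boundary
terms become jumps to zero and `TV = ∑ |Yᵢ - Yᵢ₊₁|`. As `|d| = max d (-d)`, `TV` is the maximum
of the finitely many signed sums `∑ σᵢ (Yᵢ - Yᵢ₊₁)`, `σ ∈ {±1}ⁿ`, and such a maximum is
nonincreasing once every signed sum realising it has nonpositive derivative. Since `v` is
decreasing, each `Yᵢ` moves towards `Yᵢ₊₁`; hence a realising `σ` has `σᵢ Yᵢ' = -|Yᵢ'|`, and the
derivative `∑ σᵢ (Yᵢ' - Yᵢ₊₁')` is at most the telescoping sum `∑ (|Yᵢ₊₁'| - |Yᵢ'|) = -|Y₀'|`,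
the trailing zero being at rest.
-/

open Finset Set Filter Topology

lemma eventually_lt_add_mul_sub_of_hasDerivAt {f : ℝ → ℝ} {f' x r : ℝ} (hf : HasDerivAt f f' x)
    (hr : f' < r) : ∀ᶠ z in 𝓝[>] x, f z < f x + r * (z - x) := by
  filter_upwards [(hf.hasDerivWithinAt (s := Ioi x)).limsup_slope_le' (lt_irrefl x) hr,
    self_mem_nhdsWithin] with z hz hxz
  rw [slope_def_field, div_lt_iff₀ (sub_pos.2 hxz)] at hz
  linarith

theorem antitoneOn_sup'_of_hasDerivAt {ι : Type*} {s : Finset ι} (hs : s.Nonempty)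
    {F F' : ι → ℝ → ℝ} {a : ℝ} (hF : ∀ i ∈ s, ∀ t ≥ a, HasDerivAt (F i) (F' i t) t)
    (hactive : ∀ t ≥ a, ∀ i ∈ s, F i t = s.sup' hs (F · t) → F' i t ≤ 0) :
    AntitoneOn (fun t ↦ s.sup' hs (F · t)) (Ici a) := by
  set M : ℝ → ℝ := fun t ↦ s.sup' hs (F · t)
  intro t₀ ht₀ t₁ _ ht₀₁
  have hM_cont : ContinuousOn M (Icc t₀ t₁) := fun x hx ↦
    (ContinuousAt.finset_sup'_apply hs fun i hi ↦
      (hF i hi x (le_trans ht₀ hx.1)).continuousAt).continuousWithinAt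
  have hM_slope : ∀ x ≥ a, ∀ r > 0, ∀ᶠ z in 𝓝[>] x, M z < M x + r * (z - x) := by
    intro x hx r hr
    refine ((eventually_all_finset s).2 fun i hi ↦ ?_).mono fun z hz ↦ (sup'_lt_iff hs).2 hz
    rcases (le_sup' (F · x) hi).lt_or_eq with hlt | heq
    · filter_upwards [nhdsWithin_le_nhds ((hF i hi x hx).continuousAt.eventually_lt
        continuousAt_const hlt), self_mem_nhdsWithin] with z hz hxz
      nlinarith [mem_Ioi.1 hxz]
    · simpa only [heq] using eventually_lt_add_mul_sub_of_hasDerivAt (hF i hi x hx)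
        ((hactive x hx i hi heq).trans_lt hr)
  refine image_le_of_liminf_slope_right_le_deriv_boundary hM_cont (B := fun _ ↦ M t₀)
    (B' := fun _ ↦ 0) le_rfl continuousOn_const (fun x _ ↦ hasDerivWithinAt_const x _ (M t₀))
    (fun x hx r hr ↦ Eventually.frequently ?_) ⟨ht₀₁, le_rfl⟩
  filter_upwards [hM_slope x (le_trans ht₀ hx.1) r hr, self_mem_nhdsWithin] with z hz hxz
  rw [slope_def_field, div_lt_iff₀ (sub_pos.2 hxz)]
  linarith

section SignPattern

variable {ι : Type*} [DecidableEq ι]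

def signPattern (S : Finset ι) (i : ι) : ℝ := if i ∈ S then 1 else -1

lemma signPattern_mul_le_abs (S : Finset ι) (i : ι) (x : ℝ) : signPattern S i * x ≤ |x| := by
  unfold signPattern
  split_ifs
  · simpa using le_abs_self x
  · simpa using neg_le_abs x

lemma sum_abs_eq_sup'_signPattern (s : Finset ι) (f : ι → ℝ) :
    ∑ i ∈ s, |f i| =
      s.powerset.sup' (powerset_nonempty s) (fun S ↦ ∑ i ∈ s, signPattern S i * f i) := by
  refine le_antisymm ?_ <| sup'_le _ _ fun S _ ↦
    sum_le_sum fun i _ ↦ signPattern_mul_le_abs S i (f i)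
  have hnonneg_part : {i ∈ s | 0 ≤ f i} ∈ s.powerset := mem_powerset.2 (filter_subset _ s)
  refine le_of_eq_of_le (sum_congr rfl fun i hi ↦ ?_)
    (le_sup' (fun S ↦ ∑ i ∈ s, signPattern S i * f i) hnonneg_part)
  by_cases h : 0 ≤ f i
  · simp [signPattern, hi, h, abs_of_nonneg h]
  · simp [signPattern, h, abs_of_neg (not_le.1 h)]

lemma signPattern_mul_eq_neg_abs {S : Finset ι} {i : ι} {d w : ℝ}
    (hd : signPattern S i * d = |d|) (hw_nonpos : 0 ≤ d → w ≤ 0) (hw_nonneg : d ≤ 0 → 0 ≤ w) :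
    signPattern S i * w = -|w| := by
  unfold signPattern at *
  split_ifs at *
  · rw [one_mul] at hd ⊢
    rw [abs_of_nonpos (hw_nonpos (abs_eq_self.1 hd.symm)), neg_neg]
  · rw [neg_one_mul] at hd ⊢
    rw [abs_of_nonneg (hw_nonneg (abs_eq_neg_self.1 hd.symm))]

end SignPattern

theorem antitoneOn_sum_abs_sub_of_moves_toward_next {n : ℕ} {a : ℝ} {Y Y' : ℕ → ℝ → ℝ}
    (hY : ∀ i ≤ n, ∀ t ≥ a, HasDerivAt (Y i) (Y' i t) t)
    (hdown : ∀ i < n, ∀ t ≥ a, Y (i + 1) t ≤ Y i t → Y' i t ≤ 0)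
    (hup : ∀ i < n, ∀ t ≥ a, Y i t ≤ Y (i + 1) t → 0 ≤ Y' i t)
    (hlast : ∀ t ≥ a, Y' n t = 0) :
    AntitoneOn (fun t ↦ ∑ i ∈ range n, |Y i t - Y (i + 1) t|) (Ici a) := by
  simp_rw [sum_abs_eq_sup'_signPattern]
  refine antitoneOn_sup'_of_hasDerivAt _
    (F' := fun S t ↦ ∑ i ∈ range n, signPattern S i * (Y' i t - Y' (i + 1) t))
    (fun S _ t ht ↦ HasDerivAt.fun_sum fun i hi ↦
      ((hY i (mem_range.1 hi).le t ht).sub (hY (i + 1) (mem_range.1 hi) t ht)).const_mul _)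
    fun t ht S _ hS ↦ ?_
  rw [← sum_abs_eq_sup'_signPattern] at hS
  have hrealising :
      ∀ i ∈ range n, signPattern S i * (Y i t - Y (i + 1) t) = |Y i t - Y (i + 1) t| :=
    (sum_eq_sum_iff_of_le fun i _ ↦ signPattern_mul_le_abs _ _ _).1 hS
  have hvelocity : ∀ i ∈ range n, signPattern S i * Y' i t = -|Y' i t| := fun i hi ↦
    signPattern_mul_eq_neg_abs (hrealising i hi)
      (fun h ↦ hdown i (mem_range.1 hi) t ht (sub_nonneg.1 h))
      (fun h ↦ hup i (mem_range.1 hi) t ht (sub_nonpos.1 h))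
  calc ∑ i ∈ range n, signPattern S i * (Y' i t - Y' (i + 1) t)
      ≤ ∑ i ∈ range n, (|Y' (i + 1) t| - |Y' i t|) := sum_le_sum fun i hi ↦ by
        have := signPattern_mul_le_abs S i (-Y' (i + 1) t)
        rw [mul_neg, abs_neg] at this
        rw [mul_sub, hvelocity i hi]
        linarith
    _ = |Y' n t| - |Y' 0 t| := sum_range_sub (fun i ↦ |Y' i t|) n
    _ ≤ 0 := by rw [hlast t ht, abs_zero, zero_sub, neg_nonpos]; exact abs_nonneg _

section FollowTheLeader

variable {v : ℝ → ℝ} {ℓ x y : ℝ}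

lemma velocity_nonpos_of_le (hv : AntitoneOn v (Ici 0)) (hℓ : 0 ≤ ℓ) (hy : 0 ≤ y)
    (hyx : y ≤ x) : -x ^ 2 / ℓ * (v y - v x) ≤ 0 :=
  mul_nonpos_of_nonpos_of_nonneg (div_nonpos_of_nonpos_of_nonneg (neg_nonpos.2 (sq_nonneg x)) hℓ)
    (sub_nonneg.2 (hv hy (le_trans hy hyx) hyx))

lemma velocity_nonneg_of_le (hv : AntitoneOn v (Ici 0)) (hℓ : 0 ≤ ℓ) (hx : 0 ≤ x)
    (hxy : x ≤ y) : 0 ≤ -x ^ 2 / ℓ * (v y - v x) :=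
  mul_nonneg_of_nonpos_of_nonpos (div_nonpos_of_nonpos_of_nonneg (neg_nonpos.2 (sq_nonneg x)) hℓ)
    (sub_nonpos.2 (hv hx (le_trans hx hxy) hxy))

end FollowTheLeader

def padZero (N : ℕ) (y : ℕ → ℝ → ℝ) : ℕ → ℝ → ℝ
  | 0 => 0
  | i + 1 => if i < N then y i else 0

lemma hasDerivAt_padZero {N : ℕ} {y y' : ℕ → ℝ → ℝ} {t : ℝ}
    (hy : ∀ i < N, HasDerivAt (y i) (y' i t) t) (i : ℕ) :
    HasDerivAt (padZero N y i) (padZero N y' i t) t := by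
  cases i with
  | zero => exact hasDerivAt_const t 0
  | succ i => by_cases h : i < N <;> simp [padZero, h, hy i]

lemma padZero_nonneg {N : ℕ} {y : ℕ → ℝ → ℝ} {t : ℝ} (hy : ∀ i < N, 0 ≤ y i t) :
    ∀ i, 0 ≤ padZero N y i t
  | 0 => le_rfl
  | i + 1 => by by_cases h : i < N <;> simp [padZero, h, hy i]

lemma sum_abs_sub_padZero {N : ℕ} (hN : 1 ≤ N) {y : ℕ → ℝ → ℝ} {t : ℝ} (h₀ : 0 ≤ y 0 t)
    (hlast : 0 ≤ y (N - 1) t) :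
    ∑ i ∈ range (N + 1), |padZero N y i t - padZero N y (i + 1) t| =
      y 0 t + y (N - 1) t + ∑ i ∈ range (N - 1), |y i t - y (i + 1) t| := by
  obtain ⟨M, rfl⟩ : ∃ M, N = M + 1 := ⟨N - 1, by omega⟩
  rw [Nat.add_sub_cancel] at hlast ⊢
  have hfirst : |padZero (M + 1) y 0 t - padZero (M + 1) y (0 + 1) t| = y 0 t := by
    simp [padZero, abs_of_nonneg h₀]
  have hmiddle : ∀ i ∈ range M, |padZero (M + 1) y (i + 1) t - padZero (M + 1) y (i + 1 + 1) t| =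
      |y i t - y (i + 1) t| := fun i hi ↦ by
    simp [padZero, (mem_range.1 hi).le, mem_range.1 hi]
  have hend : |padZero (M + 1) y (M + 1) t - padZero (M + 1) y (M + 1 + 1) t| = y M t := by
    simp [padZero, abs_of_nonneg hlast]
  rw [sum_range_succ', sum_range_succ, sum_congr rfl hmiddle, hfirst, hend]
  ring

theorem discrete_total_variation_nonincreasing_general
    (N : ℕ) (hN : 1 ≤ N) (v : ℝ → ℝ) (ℓ : ℝ)
    (hℓ : 0 < ℓ)
    (hv_anti : StrictAntiOn v (Set.Ici 0))
    (y : ℕ → ℝ → ℝ)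
    (hpos : ∀ i < N, ∀ t ≥ (0:ℝ), 0 < y i t)
    (hODE_last : ∀ t ≥ (0:ℝ),
      HasDerivAt (y (N - 1))
        (-(y (N - 1) t) ^ 2 / ℓ * (v 0 - v (y (N - 1) t))) t)
    (hODE : ∀ i, i + 1 < N → ∀ t ≥ (0:ℝ),
      HasDerivAt (y i)
        (-(y i t) ^ 2 / ℓ * (v (y (i + 1) t) - v (y i t))) t) :
    AntitoneOn
      (fun t => y 0 t + y (N - 1) t +
        ∑ i ∈ Finset.range (N - 1), |y i t - y (i + 1) t|)
      (Set.Ici (0:ℝ)) := by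
  set Y := padZero N y
  -- `Y (i + 2)` is `y (i + 1)`, or `0` ahead of `y (N - 1)`: both ODEs read `y i' = g i`.
  set g : ℕ → ℝ → ℝ := fun i t ↦ -(y i t) ^ 2 / ℓ * (v (Y (i + 2) t) - v (y i t))
  have hy : ∀ i < N, ∀ t ≥ (0 : ℝ), HasDerivAt (y i) (g i t) t := by
    intro i hi t ht
    by_cases h : i + 1 < N
    · simpa [g, Y, padZero, h] using hODE i h t ht
    · obtain rfl : i = N - 1 := by omega
      simpa [g, Y, padZero, h] using hODE_last t ht
  have hv : AntitoneOn v (Ici 0) := hv_anti.antitoneOn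
  have hY_nonneg : ∀ t ≥ (0 : ℝ), ∀ i, 0 ≤ Y i t := fun t ht ↦
    padZero_nonneg fun j hj ↦ (hpos j hj t ht).le
  have hTV := antitoneOn_sum_abs_sub_of_moves_toward_next (n := N + 1) (Y' := padZero N g)
    (fun i _ t ht ↦ hasDerivAt_padZero (fun j hj ↦ hy j hj t ht) i)
    (fun i hi t ht hle ↦ by
      rcases i with _ | i
      · exact le_rfl
      · simp only [padZero, show i < N by omega, ↓reduceIte] at hle ⊢
        exact velocity_nonpos_of_le hv hℓ.le (hY_nonneg t ht _) hle)
    (fun i hi t ht hle ↦ by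
      rcases i with _ | i
      · exact le_rfl
      · simp only [padZero, show i < N by omega, ↓reduceIte] at hle ⊢
        exact velocity_nonneg_of_le hv hℓ.le (hpos i (by omega) t ht).le hle)
    (fun t _ ↦ by simp [padZero])
  exact hTV.congr fun t ht ↦ sum_abs_sub_padZero hN (hpos 0 (by omega) t ht).le
    (hpos (N - 1) (by omega) t ht).le

/-- The discrete total variation (including boundary terms) is non-increasing
along the Lagrangian follow-the-leader dynamics. -/
theorem discrete_total_variation_nonincreasing
    (N : ℕ) (hN : 1 ≤ N) (v : ℝ → ℝ) (ℓ : ℝ)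
    (hℓ : 0 < ℓ)
    (hv_smooth : ContDiffOn ℝ 1 v (Set.Ici 0))
    (hv_anti : StrictAntiOn v (Set.Ici 0))
    (y : ℕ → ℝ → ℝ)
    (hpos : ∀ i < N, ∀ t ≥ (0:ℝ), 0 < y i t)
    (hODE_last : ∀ t ≥ (0:ℝ),
      HasDerivAt (y (N - 1))
        (-(y (N - 1) t) ^ 2 / ℓ * (v 0 - v (y (N - 1) t))) t)
    (hODE : ∀ i, i + 1 < N → ∀ t ≥ (0:ℝ),
      HasDerivAt (y i)
        (-(y i t) ^ 2 / ℓ * (v (y (i + 1) t) - v (y i t))) t) :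
    AntitoneOn
      (fun t => y 0 t + y (N - 1) t +
        ∑ i ∈ Finset.range (N - 1), |y i t - y (i + 1) t|)
      (Set.Ici (0:ℝ)) :=
  discrete_total_variation_nonincreasing_general N hN v ℓ hℓ hv_anti y hpos hODE_last hODE
end

section
/- Suppose v : [0,∞) → ℝ is C¹, strictly decreasing, with ρ ↦ ρ·v'(ρ) non-increasing. Let y_{N-1} : [0,∞) → (0, R] solve y_{N-1}' = -(y_{N-1}²/ℓ)(v(0) - v(y_{N-1})). Then z(t) := t·y_{N-1}(t)·(v(0) - v(y_{N-1}(t))) satisfies z(t) ≤ ℓ for all t ≥ 0. -/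
/-!
Along the leader's trajectory, `g t := v 0 - v (y t)` is nonnegative, so `y` decreases and
therefore `g` decreases as well. The ODE linearises under `y ↦ y⁻¹`: `(y⁻¹)' = g / ℓ`. Integrating
over `[0, T]` and using that `g ≥ g T` there gives `T * g T / ℓ ≤ (y T)⁻¹ - (y 0)⁻¹ < (y T)⁻¹`,
which is the claim.
-/

open Set

theorem mul_le_sub_of_hasDerivAt_of_antitoneOn {f f' : ℝ → ℝ} {a b : ℝ} (hab : a ≤ b)
    (hf : ∀ t ∈ Icc a b, HasDerivAt f (f' t) t) (hf' : AntitoneOn f' (Icc a b)) :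
    f' b * (b - a) ≤ f b - f a := by
  have hint : ∀ t ∈ interior (Icc a b), t ∈ Icc a b := fun t ht => interior_subset ht
  refine (convex_Icc a b).mul_sub_le_image_sub_of_le_deriv
    (fun t ht => (hf t ht).continuousAt.continuousWithinAt)
    (fun t ht => (hf t (hint t ht)).differentiableAt.differentiableWithinAt)
    (fun t ht => ?_) a (left_mem_Icc.2 hab) b (right_mem_Icc.2 hab) hab
  rw [(hf t (hint t ht)).deriv]
  exact hf' (hint t ht) (right_mem_Icc.2 hab) (hint t ht).2

section LeaderODE

variable {v y : ℝ → ℝ} {ℓ : ℝ}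

theorem antitoneOn_of_leader_ode (hℓ : 0 < ℓ) (hv : AntitoneOn v (Ici 0))
    (hy : ∀ t ≥ (0:ℝ), 0 < y t)
    (hODE : ∀ t ≥ (0:ℝ), HasDerivAt y (-(y t) ^ 2 / ℓ * (v 0 - v (y t))) t) :
    AntitoneOn y (Ici 0) := by
  refine antitoneOn_of_hasDerivWithinAt_nonpos (convex_Ici 0)
    (fun t ht => (hODE t ht).continuousAt.continuousWithinAt)
    (fun t ht => (hODE t (interior_subset ht)).hasDerivWithinAt) (fun t ht => ?_)
  have hgap : v (y t) ≤ v 0 :=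
    hv self_mem_Ici (hy t (interior_subset ht)).le (hy t (interior_subset ht)).le
  rw [neg_div, neg_mul, neg_nonpos]
  exact mul_nonneg (by positivity) (sub_nonneg.2 hgap)

theorem hasDerivAt_inv_of_leader_ode {t : ℝ} (hy : 0 < y t)
    (hODE : HasDerivAt y (-(y t) ^ 2 / ℓ * (v 0 - v (y t))) t) :
    HasDerivAt (fun s => (y s)⁻¹) ((v 0 - v (y t)) / ℓ) t := by
  refine (hODE.inv hy.ne').congr_deriv ?_
  field_simp

end LeaderODE

theorem discrete_oleinik_leader_general
    (v : ℝ → ℝ) (ℓ R : ℝ)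
    (hℓ : 0 < ℓ)
    (hv_anti : StrictAntiOn v (Set.Ici 0))
    (y : ℝ → ℝ)
    (hbound : ∀ t ≥ (0:ℝ), y t ∈ Set.Ioc (0:ℝ) R)
    (hODE : ∀ t ≥ (0:ℝ),
      HasDerivAt y (-(y t) ^ 2 / ℓ * (v 0 - v (y t))) t) :
    ∀ t ≥ (0:ℝ), t * y t * (v 0 - v (y t)) ≤ ℓ := by
  intro T hT
  have hy : ∀ t ≥ (0:ℝ), 0 < y t := fun t ht => (hbound t ht).1
  have hy_anti := antitoneOn_of_leader_ode hℓ hv_anti.antitoneOn hy hODE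
  have hgap_anti : AntitoneOn (fun t => (v 0 - v (y t)) / ℓ) (Icc 0 T) := fun s hs t ht hst => by
    dsimp only
    gcongr (v 0 - ?_) / ℓ
    exact hv_anti.antitoneOn (hy t ht.1).le (hy s hs.1).le (hy_anti hs.1 ht.1 hst)
  have hinc := mul_le_sub_of_hasDerivAt_of_antitoneOn hT
    (fun t ht => hasDerivAt_inv_of_leader_ode (hy t ht.1) (hODE t ht.1)) hgap_anti
  have hyT := hy T hT
  have hy0 : 0 < (y 0)⁻¹ := inv_pos.2 (hy 0 le_rfl)
  calc T * y T * (v 0 - v (y T))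
      = (v 0 - v (y T)) / ℓ * (T - 0) * (ℓ * y T) := by rw [sub_zero]; field_simp
    _ ≤ (y T)⁻¹ * (ℓ * y T) := by gcongr; linarith
    _ = ℓ := by field_simp

/-- Step 0 of the discrete Oleinik estimate: for the leader's discrete density,
`t * y * (v 0 - v y)` never exceeds `ℓ`. -/
theorem discrete_oleinik_leader
    (v : ℝ → ℝ) (ℓ R : ℝ)
    (hℓ : 0 < ℓ) (hR : 0 < R)
    (hv_smooth : ContDiffOn ℝ 1 v (Set.Ici 0))
    (hv_anti : StrictAntiOn v (Set.Ici 0))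
    (hV3 : AntitoneOn (fun ρ => ρ * deriv v ρ) (Set.Ici (0:ℝ)))
    (y : ℝ → ℝ)
    (hbound : ∀ t ≥ (0:ℝ), y t ∈ Set.Ioc (0:ℝ) R)
    (hODE : ∀ t ≥ (0:ℝ),
      HasDerivAt y (-(y t) ^ 2 / ℓ * (v 0 - v (y t))) t) :
    ∀ t ≥ (0:ℝ), t * y t * (v 0 - v (y t)) ≤ ℓ :=
  discrete_oleinik_leader_general v ℓ R hℓ hv_anti y hbound hODE
end

section
/- For the follow-the-leader system with v C¹ strictly decreasing satisfying (V3) (ρ ↦ ρv'(ρ) non-increasing), and discrete densities y_i(t) = ℓ/(x_{i+1}(t) − x_i(t)), the discrete Oleinik condition holds: t · y_i(t) · (v(y_{i+1}(t)) − v(y_i(t))) ≤ ℓ for all t ≥ 0 and i = 0, ..., N−2. -/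
/-!
Extend the densities by `y_N = 0`, so that the leader also obeys `x_N' = v(y_N)`, and write
`z_i = x_{i+1} - x_i`, `q_i = v(y_{i+1}) - v(y_i) = z_i'`. The Oleinik quantity `O_i = t y_i q_i`
vanishes for `i = N`, and `O_i ≤ ℓ` follows by downward induction on `i`. Since `y_i z_i = ℓ`,
`O_i - ℓ = y_i f_i` with `f_i = t q_i - z_i`, which is negative at `t = 0`, and the chain rule gives
`ℓ f_i' = g(y_i) O_i - g(y_{i+1}) O_{i+1}` with `g(ρ) = ρ v'(ρ)`, nonpositive and antitone by (V3).
Where `f_i > 0` we have `O_i > ℓ ≥ O_{i+1}` and `q_i > 0`, hence `y_{i+1} < y_i` and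
`g(y_i) ≤ g(y_{i+1}) ≤ 0`, so `f_i' ≤ 0`: `f_i` can never become positive.
-/

open Set

theorem nonpos_of_hasDerivAt_nonpos_of_pos {f f' : ℝ → ℝ} {a b : ℝ}
    (hf : ∀ x ∈ Icc a b, HasDerivAt f (f' x) x) (ha : f a ≤ 0)
    (hf' : ∀ x ∈ Ioo a b, 0 < f x → f' x ≤ 0) : ∀ x ∈ Icc a b, f x ≤ 0 := by
  have hcont : ContinuousOn f (Icc a b) := fun x hx => (hf x hx).continuousAt.continuousWithinAt
  refine IsClosed.Icc_subset_of_forall_exists_gt (s := {x | f x ≤ 0}) ?_ ha ?_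
  · rw [inter_comm]
    exact hcont.preimage_isClosed_of_isClosed isClosed_Icc isClosed_Iic
  rintro x ⟨hx : f x ≤ 0, hxa, hxb⟩ y hxy
  by_contra! hpos
  have hxc : x < min y b := lt_min hxy hxb
  have hf_pos : ∀ z ∈ Ioc x (min y b), 0 < f z := fun z hz =>
    not_le.mp fun hz' => hpos.subset ⟨hz', hz.1, hz.2.trans (min_le_left _ _)⟩
  have hsub : Icc x (min y b) ⊆ Icc a b := Icc_subset_Icc hxa (min_le_right _ _)
  have hanti : AntitoneOn f (Icc x (min y b)) := by
    refine antitoneOn_of_hasDerivWithinAt_nonpos (convex_Icc _ _) (hcont.mono hsub)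
      (fun z hz => (hf z (hsub (interior_subset hz))).hasDerivWithinAt) fun z hz => ?_
    rw [interior_Icc] at hz
    exact hf' z ⟨hxa.trans_lt hz.1, hz.2.trans_le (min_le_right _ _)⟩
      (hf_pos z (Ioo_subset_Ioc_self hz))
  have := hanti (left_mem_Icc.mpr hxc.le) (right_mem_Icc.mpr hxc.le) hxc.le
  exact (hf_pos _ (right_mem_Ioc.mpr hxc)).not_ge (this.trans hx)

namespace FollowTheLeader

noncomputable def density (N : ℕ) (ℓ : ℝ) (x : ℕ → ℝ → ℝ) (j : ℕ) (t : ℝ) : ℝ :=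
  if j < N then ℓ / (x (j + 1) t - x j t) else 0

noncomputable def oleinik (N : ℕ) (v : ℝ → ℝ) (ℓ : ℝ) (x : ℕ → ℝ → ℝ) (j : ℕ) (t : ℝ) : ℝ :=
  t * density N ℓ x j t * (v (density N ℓ x (j + 1) t) - v (density N ℓ x j t))

variable {N : ℕ} {v : ℝ → ℝ} {ℓ : ℝ} {x : ℕ → ℝ → ℝ}

theorem density_of_lt {j : ℕ} (hj : j < N) (t : ℝ) :
    density N ℓ x j t = ℓ / (x (j + 1) t - x j t) := if_pos hj

theorem density_of_le {j : ℕ} (hj : N ≤ j) (t : ℝ) : density N ℓ x j t = 0 :=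
  if_neg hj.not_gt

theorem density_mul_gap {j : ℕ} (hj : j < N) {t : ℝ} (hgap : x j t < x (j + 1) t) :
    density N ℓ x j t * (x (j + 1) t - x j t) = ℓ := by
  rw [density_of_lt hj]
  exact div_mul_cancel₀ ℓ (sub_pos.mpr hgap).ne'

theorem density_pos (hℓ : 0 < ℓ) {j : ℕ} (hj : j < N) {t : ℝ} (hgap : x j t < x (j + 1) t) :
    0 < density N ℓ x j t := by
  rw [density_of_lt hj]
  exact div_pos hℓ (sub_pos.mpr hgap)

theorem oleinik_sub_eq {i : ℕ} (hi : i < N) {t : ℝ} (hgap : x i t < x (i + 1) t) :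
    oleinik N v ℓ x i t - ℓ = density N ℓ x i t *
      (t * (v (density N ℓ x (i + 1) t) - v (density N ℓ x i t)) - (x (i + 1) t - x i t)) := by
  rw [oleinik]
  linear_combination density_mul_gap (ℓ := ℓ) hi hgap

structure IsSolution (N : ℕ) (v : ℝ → ℝ) (ℓ : ℝ) (x : ℕ → ℝ → ℝ) : Prop where
  lt_succ : ∀ i < N, ∀ t ≥ (0:ℝ), x i t < x (i + 1) t
  hasDerivAt_leader : ∀ t ≥ (0:ℝ), HasDerivAt (x N) (v 0) t
  hasDerivAt_follower : ∀ i < N, ∀ t ≥ (0:ℝ),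
    HasDerivAt (x i) (v (ℓ / (x (i + 1) t - x i t))) t

namespace IsSolution

variable (h : IsSolution N v ℓ x)
include h

theorem hasDerivAt_position {j : ℕ} (hj : j ≤ N) {t : ℝ} (ht : 0 ≤ t) :
    HasDerivAt (x j) (v (density N ℓ x j t)) t := by
  rcases hj.lt_or_eq with hj | rfl
  · rw [density_of_lt hj]
    exact h.hasDerivAt_follower j hj t ht
  · rw [density_of_le le_rfl]
    exact h.hasDerivAt_leader t ht

theorem density_nonneg (hℓ : 0 < ℓ) (j : ℕ) {t : ℝ} (ht : 0 ≤ t) : 0 ≤ density N ℓ x j t := by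
  rcases lt_or_ge j N with hj | hj
  · exact (density_pos hℓ hj (h.lt_succ j hj t ht)).le
  · exact (density_of_le hj t).ge

theorem hasDerivAt_density {j : ℕ} (hj : j < N) {t : ℝ} (ht : 0 ≤ t) :
    HasDerivAt (density N ℓ x j)
      (-density N ℓ x j t ^ 2 * (v (density N ℓ x (j + 1) t) - v (density N ℓ x j t)) / ℓ) t := by
  have hgap := sub_pos.mpr (h.lt_succ j hj t ht)
  have hgap' : HasDerivAt (fun s => x (j + 1) s - x j s)
      (v (density N ℓ x (j + 1) t) - v (density N ℓ x j t)) t :=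
    (h.hasDerivAt_position hj ht).sub (h.hasDerivAt_position hj.le ht)
  generalize v (density N ℓ x (j + 1) t) - v (density N ℓ x j t) = q at hgap' ⊢
  rw [show density N ℓ x j = fun s => ℓ / (x (j + 1) s - x j s) from funext (density_of_lt hj)]
  refine ((hasDerivAt_const t ℓ).div hgap' hgap.ne').congr_deriv ?_
  field_simp
  ring

theorem hasDerivAt_comp_density (hℓ : 0 < ℓ) (hv : ContDiffOn ℝ 1 v (Ici 0)) {j : ℕ}
    (hj : j ≤ N) {t : ℝ} (ht : 0 ≤ t) :
    HasDerivAt (fun s => v (density N ℓ x j s)) (deriv v (density N ℓ x j t) *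
      (-density N ℓ x j t ^ 2 * (v (density N ℓ x (j + 1) t) - v (density N ℓ x j t)) / ℓ)) t := by
  rcases hj.lt_or_eq with hj | rfl
  · have hy := density_pos hℓ hj (h.lt_succ j hj t ht)
    have hv' : HasDerivAt v (deriv v _) _ :=
      ((hv.differentiableOn one_ne_zero _ hy.le).differentiableAt (Ici_mem_nhds hy)).hasDerivAt
    exact hv'.comp t (h.hasDerivAt_density hj ht)
  · simp only [density_of_le le_rfl]
    simpa using hasDerivAt_const t (v 0)

theorem hasDerivAt_mul_sub_gap (hℓ : 0 < ℓ) (hv : ContDiffOn ℝ 1 v (Ici 0)) {i : ℕ} (hi : i < N)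
    {t : ℝ} (ht : 0 ≤ t) :
    HasDerivAt (fun s => s * (v (density N ℓ x (i + 1) s) - v (density N ℓ x i s)) -
        (x (i + 1) s - x i s))
      ((density N ℓ x i t * deriv v (density N ℓ x i t) * oleinik N v ℓ x i t -
        density N ℓ x (i + 1) t * deriv v (density N ℓ x (i + 1) t) * oleinik N v ℓ x (i + 1) t)
          / ℓ) t := by
  have hq := (h.hasDerivAt_comp_density hℓ hv hi ht).sub (h.hasDerivAt_comp_density hℓ hv hi.le ht)
  refine (((hasDerivAt_id t).mul hq).sub
    ((h.hasDerivAt_position hi ht).sub (h.hasDerivAt_position hi.le ht))).congr_deriv ?_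
  simp only [oleinik, id, Pi.sub_apply]
  ring

theorem oleinik_le_of_succ (hℓ : 0 < ℓ) (hv : ContDiffOn ℝ 1 v (Ici 0))
    (hv_anti : StrictAntiOn v (Ici 0)) (hV3 : AntitoneOn (fun ρ => ρ * deriv v ρ) (Ici 0))
    {i : ℕ} (hi : i < N) (hsucc : ∀ s ≥ 0, oleinik N v ℓ x (i + 1) s ≤ ℓ) {t : ℝ} (ht : 0 ≤ t) :
    oleinik N v ℓ x i t ≤ ℓ := by
  set y := density N ℓ x
  set g := fun ρ => ρ * deriv v ρ
  set f := fun s => s * (v (y (i + 1) s) - v (y i s)) - (x (i + 1) s - x i s)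
  have hf_nonpos : ∀ s ∈ Icc 0 t, f s ≤ 0 := by
    refine nonpos_of_hasDerivAt_nonpos_of_pos (fun s hs => h.hasDerivAt_mul_sub_gap hℓ hv hi hs.1)
      (by simpa [f] using (h.lt_succ i hi 0 le_rfl).le) fun s hs hfs => ?_
    have hgap := h.lt_succ i hi s hs.1.le
    have hyi := density_pos hℓ hi hgap
    have hyi1 := h.density_nonneg hℓ (i + 1) hs.1.le
    have hO : ℓ < oleinik N v ℓ x i s := by
      nlinarith [oleinik_sub_eq (v := v) (ℓ := ℓ) hi hgap, mul_pos hyi hfs]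
    have hq : v (y i s) < v (y (i + 1) s) := by
      by_contra! hq
      nlinarith [mul_nonneg hs.1.le (sub_nonneg.mpr hq)]
    have hy : y (i + 1) s < y i s := (hv_anti.lt_iff_gt hyi.le hyi1).mp hq
    have hg : g (y i s) ≤ g (y (i + 1) s) := hV3 hyi1 hyi.le hy.le
    have hg_nonpos : g (y (i + 1) s) ≤ 0 := by
      simpa [g] using hV3 self_mem_Ici hyi1 hyi1
    refine div_nonpos_of_nonpos_of_nonneg (sub_nonpos.mpr ?_) hℓ.le
    calc g (y i s) * oleinik N v ℓ x i s
        ≤ g (y i s) * ℓ := mul_le_mul_of_nonpos_left hO.le (hg.trans hg_nonpos)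
      _ ≤ g (y (i + 1) s) * ℓ := mul_le_mul_of_nonneg_right hg hℓ.le
      _ ≤ g (y (i + 1) s) * oleinik N v ℓ x (i + 1) s :=
        mul_le_mul_of_nonpos_left (hsucc s hs.1.le) hg_nonpos
  have hgap := h.lt_succ i hi t ht
  nlinarith [oleinik_sub_eq (v := v) (ℓ := ℓ) hi hgap, density_pos hℓ hi hgap,
    hf_nonpos t ⟨ht, le_rfl⟩]

theorem oleinik_le (hℓ : 0 < ℓ) (hv : ContDiffOn ℝ 1 v (Ici 0))
    (hv_anti : StrictAntiOn v (Ici 0)) (hV3 : AntitoneOn (fun ρ => ρ * deriv v ρ) (Ici 0))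
    {j : ℕ} (hj : j ≤ N) {t : ℝ} (ht : 0 ≤ t) : oleinik N v ℓ x j t ≤ ℓ := by
  induction hj using Nat.decreasingInduction generalizing t with
  | self => simpa [oleinik, density_of_le] using hℓ.le
  | of_succ i hi ih => exact h.oleinik_le_of_succ hℓ hv hv_anti hV3 hi (fun s hs => ih hs) ht

end IsSolution

end FollowTheLeader

theorem discrete_oleinik_condition_general
    (N : ℕ) (v : ℝ → ℝ) (ℓ : ℝ)
    (hℓ : 0 < ℓ)
    (hv_smooth : ContDiffOn ℝ 1 v (Set.Ici 0))
    (hv_anti : StrictAntiOn v (Set.Ici 0))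
    (hV3 : AntitoneOn (fun ρ => ρ * deriv v ρ) (Set.Ici (0:ℝ)))
    (x : ℕ → ℝ → ℝ)
    (hOrder : ∀ i < N, ∀ t ≥ (0:ℝ), x i t < x (i + 1) t)
    (hODE_leader : ∀ t ≥ (0:ℝ), HasDerivAt (x N) (v 0) t)
    (hODE : ∀ i < N, ∀ t ≥ (0:ℝ),
      HasDerivAt (x i) (v (ℓ / (x (i + 1) t - x i t))) t) :
    ∀ t ≥ (0:ℝ), ∀ i, i + 1 < N →
      t * (ℓ / (x (i + 1) t - x i t)) *
        (v (ℓ / (x (i + 2) t - x (i + 1) t)) - v (ℓ / (x (i + 1) t - x i t)))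
      ≤ ℓ := by
  intro t ht i hi
  have h : FollowTheLeader.IsSolution N v ℓ x := ⟨hOrder, hODE_leader, hODE⟩
  have := h.oleinik_le hℓ hv_smooth hv_anti hV3 (j := i) (by omega) ht
  rwa [FollowTheLeader.oleinik, FollowTheLeader.density_of_lt (by omega),
    FollowTheLeader.density_of_lt hi] at this

/-- Discrete Oleinik condition for the follow-the-leader system. -/
theorem discrete_oleinik_condition
    (N : ℕ) (v : ℝ → ℝ) (ℓ R : ℝ)
    (hℓ : 0 < ℓ) (hR : 0 < R)
    (hv_smooth : ContDiffOn ℝ 1 v (Set.Ici 0))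
    (hv_anti : StrictAntiOn v (Set.Ici 0))
    (hV3 : AntitoneOn (fun ρ => ρ * deriv v ρ) (Set.Ici (0:ℝ)))
    (x : ℕ → ℝ → ℝ)
    (hOrder : ∀ i < N, ∀ t ≥ (0:ℝ), x i t < x (i + 1) t)
    (hODE_leader : ∀ t ≥ (0:ℝ), HasDerivAt (x N) (v 0) t)
    (hODE : ∀ i < N, ∀ t ≥ (0:ℝ),
      HasDerivAt (x i) (v (ℓ / (x (i + 1) t - x i t))) t)
    (hmax : ∀ i < N, ∀ t ≥ (0:ℝ), ℓ / (x (i + 1) t - x i t) ≤ R) :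
    ∀ t ≥ (0:ℝ), ∀ i, i + 1 < N →
      t * (ℓ / (x (i + 1) t - x i t)) *
        (v (ℓ / (x (i + 2) t - x (i + 1) t)) - v (ℓ / (x (i + 1) t - x i t)))
      ≤ ℓ :=
  discrete_oleinik_condition_general N v ℓ hℓ hv_smooth hv_anti hV3 x hOrder hODE_leader hODE
end

section
/- For the N-particle piecewise linear cumulative distribution F̂ (interpolating linearly between the points (x_i, iℓ)) and the piecewise constant cumulative distribution F̃ (jumping by ℓ at each x_i), one has ‖F̂ − F̃‖_{L¹(ℝ)} ≤ (ℓ/2)(x_N − x_0). Equivalently, the scaled 1-Wasserstein distance between the piecewise constant density ρ̂ = Σ y_i 𝟙_{[x_i, x_{i+1})} (with y_i = ℓ/(x_{i+1} − x_i)) and the empirical measure ρ̃ = ℓ Σ δ_{x_i} is at most (ℓ/2)(x_N − x_0). -/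
/-!
Extending the last step of `F̃` by one cell writes both cumulative distributions as sums over the
same cells `[x i, x (i + 1))`. On each cell `F̂ - F̃` is affine, equal to `-ℓ` at `x i` and vanishing
at `x (i + 1)`, so by the triangle inequality the integral of `|F̂ - F̃|` is at most the sum of the
triangle areas `ℓ (x (i + 1) - x i) / 2`, which telescopes to `ℓ (x N - x 0) / 2`.
-/

open MeasureTheory Set Finset

theorem sum_range_succ_indicator_Ico_add_indicator_Ici {α M : Type*} [LinearOrder α]
    [AddCommMonoid M] (x : ℕ → α) (f : ℕ → α → M) (n : ℕ) (hx : x n ≤ x (n + 1)) (t : α) :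
    ∑ i ∈ range (n + 1), (Ico (x i) (x (i + 1))).indicator (f i) t
        + (Ici (x (n + 1))).indicator (f n) t
      = ∑ i ∈ range n, (Ico (x i) (x (i + 1))).indicator (f i) t
        + (Ici (x n)).indicator (f n) t := by
  have hdisj : Disjoint (Ico (x n) (x (n + 1))) (Ici (x (n + 1))) :=
    disjoint_left.2 fun _ h h' => not_le.2 h.2 h'
  rw [sum_range_succ, add_assoc, ← Ico_union_Ici_eq_Ici hx,
    indicator_union_of_disjoint hdisj]

theorem integral_abs_sum_indicator_le {α ι : Type*} [MeasurableSpace α] (μ : Measure α)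
    (s : Finset ι) {I : ι → Set α} (hI : ∀ i ∈ s, MeasurableSet (I i)) {g : ι → α → ℝ}
    (hg : ∀ i ∈ s, IntegrableOn (g i) (I i) μ) :
    ∫ t, |∑ i ∈ s, (I i).indicator (g i) t| ∂μ ≤ ∑ i ∈ s, ∫ t in I i, |g i t| ∂μ := by
  have hint : ∀ i ∈ s, Integrable ((I i).indicator (g i)) μ := fun i hi =>
    (hg i hi).integrable_indicator (hI i hi)
  have hint_abs : ∀ i ∈ s, Integrable ((I i).indicator fun t => |g i t|) μ := fun i hi =>
    IntegrableOn.integrable_indicator (hg i hi).abs (hI i hi)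
  calc ∫ t, |∑ i ∈ s, (I i).indicator (g i) t| ∂μ
      ≤ ∫ t, ∑ i ∈ s, (I i).indicator (fun t => |g i t|) t ∂μ := by
        refine integral_mono (integrable_finsetSum s hint).abs (integrable_finsetSum s hint_abs)
          fun t => (abs_sum_le_sum_abs _ _).trans_eq (sum_congr rfl fun i _ => ?_)
        by_cases ht : t ∈ I i <;> simp [ht]
    _ = ∑ i ∈ s, ∫ t in I i, |g i t| ∂μ := by
        rw [integral_finsetSum s hint_abs]
        exact sum_congr rfl fun i hi => integral_indicator (hI i hi)

theorem integral_Ico_abs_mul_sub_right {a b : ℝ} (hab : a ≤ b) (c : ℝ) :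
    ∫ t in Ico a b, |c * (t - b)| = |c| * (b - a) ^ 2 / 2 := by
  rw [integral_Ico_eq_integral_Ioo, ← integral_Ioc_eq_integral_Ioo,
    ← intervalIntegral.integral_of_le hab]
  have hcongr : EqOn (fun t => |c * (t - b)|) (fun t => |c| * (b - t)) (uIcc a b) := by
    intro t ht
    rw [uIcc_of_le hab] at ht
    simp only [abs_mul, abs_sub_comm t b, abs_of_nonneg (sub_nonneg.2 ht.2)]
  rw [intervalIntegral.integral_congr hcongr, intervalIntegral.integral_const_mul,
    intervalIntegral.integral_sub intervalIntegrable_const intervalIntegral.intervalIntegrable_id,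
    intervalIntegral.integral_const, integral_id, smul_eq_mul]
  ring

/-- The `L¹` distance between the piecewise linear and the piecewise constant
cumulative distributions of the particle system (i.e. the scaled 1-Wasserstein
distance between `ρ̂` and `ρ̃`) is at most `(ℓ/2)(x_N - x_0)`. -/
theorem wasserstein_distance_hat_tilde
    (N : ℕ) (hN : 1 ≤ N) (ℓ : ℝ) (hℓ : 0 < ℓ)
    (x : ℕ → ℝ)
    (hOrder : ∀ i < N, x i < x (i + 1))
    (Fhat Ftilde : ℝ → ℝ)
    (hFhat : ∀ s, Fhat s =
      (∑ i ∈ Finset.range N,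
        Set.indicator (Set.Ico (x i) (x (i + 1)))
          (fun s => (i : ℝ) * ℓ + ℓ / (x (i + 1) - x i) * (s - x i)) s)
      + Set.indicator (Set.Ici (x N)) (fun _ => (N : ℝ) * ℓ) s)
    (hFtilde : ∀ s, Ftilde s =
      (∑ i ∈ Finset.range (N - 1),
        Set.indicator (Set.Ico (x i) (x (i + 1)))
          (fun _ => ((i : ℝ) + 1) * ℓ) s)
      + Set.indicator (Set.Ici (x (N - 1))) (fun _ => (N : ℝ) * ℓ) s) :
    ∫ s : ℝ, |Fhat s - Ftilde s| ≤ ℓ / 2 * (x N - x 0) := by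
  obtain ⟨n, rfl⟩ : ∃ n, N = n + 1 := ⟨N - 1, by omega⟩
  have hgap : ∀ i ∈ range (n + 1), x (i + 1) - x i ≠ 0 := fun i hi =>
    (sub_pos.2 (hOrder i (mem_range.1 hi))).ne'
  have hdiff : ∀ s, Fhat s - Ftilde s = ∑ i ∈ range (n + 1),
      (Ico (x i) (x (i + 1))).indicator (fun t => ℓ / (x (i + 1) - x i) * (t - x (i + 1))) s := by
    intro s
    have hstep := sum_range_succ_indicator_Ico_add_indicator_Ici x
      (fun i _ => ((i : ℝ) + 1) * ℓ) n (hOrder n n.lt_succ_self).le s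
    rw [hFhat, hFtilde, Nat.add_sub_cancel, Nat.cast_succ, ← hstep, add_sub_add_right_eq_sub,
      ← sum_sub_distrib]
    refine sum_congr rfl fun i hi => ?_
    by_cases hs : s ∈ Ico (x i) (x (i + 1))
    · simp only [indicator_of_mem hs]
      field_simp [hgap i hi]
      ring
    · simp only [indicator_of_notMem hs, sub_zero]
  calc ∫ s, |Fhat s - Ftilde s|
      ≤ ∑ i ∈ range (n + 1), ∫ t in Ico (x i) (x (i + 1)),
          |ℓ / (x (i + 1) - x i) * (t - x (i + 1))| := by
        simp_rw [hdiff]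
        exact integral_abs_sum_indicator_le _ _ (fun _ _ => measurableSet_Ico)
          fun _ _ => (Continuous.integrableOn_Icc (by fun_prop)).mono_set Ico_subset_Icc_self
    _ = ∑ i ∈ range (n + 1), ℓ / 2 * (x (i + 1) - x i) := by
        refine sum_congr rfl fun i hi => ?_
        rw [integral_Ico_abs_mul_sub_right (hOrder i (mem_range.1 hi)).le,
          abs_of_pos (div_pos hℓ (sub_pos.2 (hOrder i (mem_range.1 hi))))]
        field_simp [hgap i hi]
    _ = ℓ / 2 * (x (n + 1) - x 0) := by rw [← mul_sum, sum_range_sub]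
end

section
/- With the atomization x̄_i of a compactly supported nonnegative density ρ̄ of mass L into N = L/ℓ pieces of mass ℓ, the empirical measure ρ̃ = ℓΣ_{i=0}^{N−1} δ_{x̄_i} satisfies d_{L,1}(ρ̃, ρ̄) ≤ ℓ(x̄_max − x̄_min), where d_{L,1} is the L¹ distance of cumulative distribution functions and x̄_min, x̄_max are the extremes of the convex hull of supp ρ̄. -/
/-!
Let `x₀ ≤ ⋯ ≤ x_N` be the atoms and `F̄` the cumulative distribution of `ρ̄`, so that
`F̄ (x_i) = i ℓ`. On `[x_k, x_{k+1})` the staircase `F̃` equals `(k + 1) ℓ`, while the monotone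
`F̄` lies between `F̄ (x_k) = k ℓ` and `F̄ (x_{k+1}) = (k + 1) ℓ`; outside `[x₀, x_N]` both
vanish or both equal `L`. Hence `|F̃ - F̄| ≤ ℓ · 𝟙_[x₀, x_N]` pointwise, and integrating gives
the bound.
-/

open MeasureTheory intervalIntegral Set

section Staircase

variable {α M : Type*} [LinearOrder α] {x : ℕ → α} {N k : ℕ} {t : α}

theorem exists_le_and_lt_succ_of_le (hN : 0 < N) (ht : x 0 ≤ t) :
    ∃ k < N, x k ≤ t ∧ (k + 1 = N ∨ t < x (k + 1)) := by
  induction N, hN using Nat.le_induction with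
  | base => exact ⟨0, one_pos, ht, Or.inl rfl⟩
  | succ n _ ih =>
    obtain ⟨k, hkn, hkt, rfl | hlt⟩ := ih
    · by_cases hnext : x (k + 1) ≤ t
      · exact ⟨k + 1, lt_add_one _, hnext, Or.inl rfl⟩
      · exact ⟨k, by omega, hkt, Or.inr (not_le.mp hnext)⟩
    · exact ⟨k, by omega, hkt, Or.inr hlt⟩

variable [AddCommMonoid M] (c : M)

theorem sum_indicator_Ici_eq_zero (hx : MonotoneOn x (Iic N)) (ht : t < x 0) :
    ∑ i ∈ Finset.range N, (Ici (x i)).indicator (fun _ => c) t = 0 :=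
  Finset.sum_eq_zero fun i hi => indicator_of_notMem
    (fun hle => (ht.trans_le (hx (mem_Iic.mpr N.zero_le) (Finset.mem_range.mp hi).le
      i.zero_le)).not_ge hle) _

theorem sum_indicator_Ici_eq_succ_nsmul (hx : MonotoneOn x (Iic N)) (hkN : k < N)
    (hkt : x k ≤ t) (hnext : k + 1 = N ∨ t < x (k + 1)) :
    ∑ i ∈ Finset.range N, (Ici (x i)).indicator (fun _ => c) t = (k + 1) • c := by
  rw [← Finset.sum_range_add_sum_Ico _ (Nat.succ_le_of_lt hkN)]
  have hlow : ∀ i ∈ Finset.range (k + 1), (Ici (x i)).indicator (fun _ => c) t = c := by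
    intro i hi
    have hik : i ≤ k := Nat.lt_succ_iff.mp (Finset.mem_range.mp hi)
    exact indicator_of_mem ((hx (mem_Iic.mpr (hik.trans hkN.le)) (mem_Iic.mpr hkN.le) hik).trans
      hkt) _
  have hhigh : ∀ i ∈ Finset.Ico (k + 1) N, (Ici (x i)).indicator (fun _ => c) t = 0 := by
    intro i hi
    obtain ⟨hki, hiN⟩ := Finset.mem_Ico.mp hi
    have hlt : t < x (k + 1) := hnext.resolve_left (by omega)
    exact indicator_of_notMem (fun hle => (hlt.trans_le (hx (mem_Iic.mpr (by omega))
      (mem_Iic.mpr hiN.le) hki)).not_ge hle) _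
  rw [Finset.sum_congr rfl hlow, Finset.sum_congr rfl hhigh, Finset.sum_const,
    Finset.card_range, Finset.sum_const_zero, add_zero]

variable {F : α → ℝ} {ℓ : ℝ}

theorem abs_sum_indicator_Ici_sub_le (hN : 0 < N) (hx : MonotoneOn x (Iic N)) (hF : Monotone F)
    (hF_nonneg : ∀ t, 0 ≤ F t) (hF_le : ∀ t, F t ≤ N * ℓ) (hFx : ∀ i ≤ N, F (x i) = i * ℓ)
    (t : α) :
    |∑ i ∈ Finset.range N, (Ici (x i)).indicator (fun _ => ℓ) t - F t| ≤
      (Icc (x 0) (x N)).indicator (fun _ => ℓ) t := by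
  rcases lt_or_ge t (x 0) with ht | h0t
  · have hFt : F t = 0 :=
      le_antisymm (by simpa [hFx 0 N.zero_le] using hF ht.le) (hF_nonneg t)
    rw [sum_indicator_Ici_eq_zero ℓ hx ht, hFt, indicator_of_notMem (fun h => ht.not_ge h.1)]
    simp
  obtain ⟨k, hkN, hkt, hnext⟩ := exists_le_and_lt_succ_of_le hN h0t
  rw [sum_indicator_Ici_eq_succ_nsmul ℓ hx hkN hkt hnext, nsmul_eq_mul, Nat.cast_succ]
  have hlow : k * ℓ ≤ F t := hFx k hkN.le ▸ hF hkt
  have hup : F t ≤ (k + 1 : ℕ) * ℓ := by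
    rcases hnext with hkN' | hlt
    · exact hkN' ▸ hF_le t
    · exact hFx (k + 1) hkN ▸ hF hlt.le
  push_cast at hup
  rcases le_or_gt t (x N) with htN | htN
  · rw [indicator_of_mem (mem_Icc.mpr ⟨h0t, htN⟩), abs_le]
    constructor <;> linarith
  · have hk : k + 1 = N := hnext.resolve_right fun hlt =>
      (hlt.trans_le (hx (mem_Iic.mpr hkN) (mem_Iic.mpr le_rfl) hkN)).not_gt htN
    have hFt : F t = N * ℓ := le_antisymm (hF_le t) (hFx N le_rfl ▸ hF htN.le)
    rw [indicator_of_notMem (fun h => htN.not_ge h.2), hFt, ← hk]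
    push_cast
    simp

end Staircase

section CumulativeIntegral

theorem monotone_setIntegral_Iic {α : Type*} [Preorder α] [MeasurableSpace α] {μ : Measure α}
    {f : α → ℝ} (hf : Integrable f μ) (hf_nonneg : 0 ≤ᵐ[μ] f) :
    Monotone fun x => ∫ y in Iic x, f y ∂μ := fun _ _ hab =>
  setIntegral_mono_set hf.integrableOn (ae_restrict_of_ae hf_nonneg)
    (Iic_subset_Iic.mpr hab).eventuallyLE

theorem setIntegral_Iic_eq_add_nsmul {E : Type*} [NormedAddCommGroup E] [NormedSpace ℝ E]
    {μ : Measure ℝ} {f : ℝ → E} (hf : Integrable f μ) {x : ℕ → ℝ} {N : ℕ} {c : E}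
    (hpieces : ∀ i < N, ∫ y in x i..x (i + 1), f y ∂μ = c) {i : ℕ} (hi : i ≤ N) :
    ∫ y in Iic (x i), f y ∂μ = ∫ y in Iic (x 0), f y ∂μ + i • c := by
  induction i with
  | zero => simp
  | succ i ih =>
    rw [← sub_add_cancel (∫ y in Iic (x (i + 1)), f y ∂μ) (∫ y in Iic (x i), f y ∂μ),
      integral_Iic_sub_Iic hf.integrableOn hf.integrableOn, hpieces i hi, ih (by omega),
      succ_nsmul]
    abel

theorem setIntegral_Iic_sInf_support_eq_zero {X E : Type*} [ConditionallyCompleteLinearOrder X]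
    [MeasurableSpace X] {μ : Measure X} [NullSingletonClass μ] [NormedAddCommGroup E]
    [NormedSpace ℝ E] {f : X → E} (hf : BddBelow (Function.support f)) :
    ∫ y in Iic (sInf (Function.support f)), f y ∂μ = 0 := by
  rw [integral_Iic_eq_integral_Iio]
  exact setIntegral_eq_zero_of_forall_eq_zero fun _ hy =>
    Function.notMem_support.mp (notMem_of_lt_csInf hy hf)

end CumulativeIntegral

theorem atomization_wasserstein_estimate_general
    (N : ℕ) (hN : 0 < N) (ρbar : ℝ → ℝ) (L ℓ xmin xmax : ℝ)
    (hℓ : ℓ = L / N)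
    (hnn : ∀ x, 0 ≤ ρbar x)
    (hint : Integrable ρbar)
    (hsupp : HasCompactSupport ρbar)
    (hmass : ∫ x, ρbar x = L)
    (hxmin : xmin = sInf (Function.support ρbar))
    (xbar : ℕ → ℝ)
    (hmono : ∀ i < N, xbar i ≤ xbar (i + 1))
    (h0 : xbar 0 = xmin) (hend : xbar N = xmax)
    (hpieces : ∀ i < N, ∫ y in (xbar i)..(xbar (i + 1)), ρbar y = ℓ)
    (Ftilde Fbar : ℝ → ℝ)
    (hFtilde : ∀ x, Ftilde x =
      ∑ i ∈ Finset.range N, Set.indicator (Set.Ici (xbar i)) (fun _ => ℓ) x)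
    (hFbar : ∀ x, Fbar x = ∫ y in Set.Iic x, ρbar y) :
    ∫ x : ℝ, |Ftilde x - Fbar x| ≤ ℓ * (xmax - xmin) := by
  obtain rfl : Fbar = fun x => ∫ y in Iic x, ρbar y := funext hFbar
  have hρ_nonneg : 0 ≤ᵐ[volume] ρbar := ae_of_all _ hnn
  have hxbar : MonotoneOn xbar (Iic N) :=
    monotoneOn_of_le_add_one ordConnected_Iic fun i _ _ hi => hmono i hi
  have hF_atoms : ∀ i ≤ N, ∫ y in Iic (xbar i), ρbar y = i * ℓ := fun i hi => by
    rw [setIntegral_Iic_eq_add_nsmul hint hpieces hi, h0, hxmin,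
      setIntegral_Iic_sInf_support_eq_zero (hsupp.isCompact.bddBelow.mono (subset_tsupport ρbar)),
      zero_add, nsmul_eq_mul]
  have hF_le : ∀ t, ∫ y in Iic t, ρbar y ≤ N * ℓ := fun t => by
    rw [hℓ, mul_div_cancel₀ L (Nat.cast_ne_zero.mpr hN.ne'), ← hmass]
    exact setIntegral_le_integral hint hρ_nonneg
  have hbound : ∀ t,
      |Ftilde t - ∫ y in Iic t, ρbar y| ≤ (Icc xmin xmax).indicator (fun _ => ℓ) t := by
    intro t
    rw [hFtilde, ← h0, ← hend]
    exact abs_sum_indicator_Ici_sub_le hN hxbar (monotone_setIntegral_Iic hint hρ_nonneg)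
      (fun t => setIntegral_nonneg measurableSet_Iic fun y _ => hnn y) hF_le hF_atoms t
  have hxmin_le : xmin ≤ xmax :=
    h0 ▸ hend ▸ hxbar (mem_Iic.mpr N.zero_le) (mem_Iic.mpr le_rfl) N.zero_le
  calc ∫ x, |Ftilde x - ∫ y in Iic x, ρbar y|
      ≤ ∫ x, (Icc xmin xmax).indicator (fun _ => ℓ) x :=
        integral_mono_of_nonneg (ae_of_all _ fun _ => abs_nonneg _)
          (continuous_const.integrableOn_Icc.integrable_indicator measurableSet_Icc)
          (ae_of_all _ hbound)
    _ = ℓ * (xmax - xmin) := by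
      rw [integral_indicator_const _ measurableSet_Icc, Real.volume_real_Icc_of_le hxmin_le,
        smul_eq_mul, mul_comm]

/-- The empirical measure obtained from the atomization is at scaled
1-Wasserstein distance at most `ℓ (x̄_max - x̄_min)` from the initial density. -/
theorem atomization_wasserstein_estimate
    (N : ℕ) (hN : 0 < N) (ρbar : ℝ → ℝ) (L ℓ xmin xmax : ℝ)
    (hL : 0 < L) (hℓ : ℓ = L / N)
    (hmeas : Measurable ρbar) (hnn : ∀ x, 0 ≤ ρbar x)
    (hint : Integrable ρbar)
    (hsupp : HasCompactSupport ρbar)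
    (hmass : ∫ x, ρbar x = L)
    (hxmin : xmin = sInf (Function.support ρbar))
    (hxmax : xmax = sSup (Function.support ρbar))
    (xbar : ℕ → ℝ)
    (hmono : ∀ i < N, xbar i ≤ xbar (i + 1))
    (h0 : xbar 0 = xmin) (hend : xbar N = xmax)
    (hpieces : ∀ i < N, ∫ y in (xbar i)..(xbar (i + 1)), ρbar y = ℓ)
    (Ftilde Fbar : ℝ → ℝ)
    (hFtilde : ∀ x, Ftilde x =
      ∑ i ∈ Finset.range N, Set.indicator (Set.Ici (xbar i)) (fun _ => ℓ) x)
    (hFbar : ∀ x, Fbar x = ∫ y in Set.Iic x, ρbar y) :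
    ∫ x : ℝ, |Ftilde x - Fbar x| ≤ ℓ * (xmax - xmin) :=
  atomization_wasserstein_estimate_general N hN ρbar L ℓ xmin xmax hℓ hnn hint hsupp hmass hxmin
    xbar hmono h0 hend hpieces Ftilde Fbar hFtilde hFbar
end

section
/- Under assumptions (V1)-(V3) and for discrete densities y_i ∈ (0, R] solving the Lagrangian ODE system with velocity total variation bound TV[v(ρ̌ⁿ(τ))] ≤ C_δ for τ ≥ δ, the discrete Lagrangian density ρ̌ⁿ(t,z) = Σ y_i(t)𝟙_{[iℓ,(i+1)ℓ)}(z) satisfies the L¹ time continuity estimate ∫_0^L |ρ̌ⁿ(t,z) − ρ̌ⁿ(s,z)| dz ≤ R²(C_δ + v(0) − v(R))|t − s| for all t, s ≥ δ. -/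
/-!
By the total variation bound for the interior particles and the monotonicity of `v` for the
last one, the right-hand side of the Lagrangian system has `ℓ¹` norm at most
`R² (C_δ + v 0 - v R) / ℓ` for `τ ≥ δ`. Hence `τ ↦ (y_i τ)_i` is Lipschitz in `ℓ¹` with that
constant, and the `L¹` distance of two piecewise constant densities on cells of length `ℓ` is
at most `ℓ` times the `ℓ¹` distance of their values.
-/

open MeasureTheory Finset Set

theorem AntitoneOn.abs_sub_le_of_mem_Icc {α β : Type*} [Preorder α] [AddCommGroup β]
    [LinearOrder β] [IsOrderedAddMonoid β] {f : α → β} {a b x : α}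
    (hf : AntitoneOn f (Icc a b)) (hx : x ∈ Icc a b) : |f a - f x| ≤ f a - f b := by
  have hab : a ≤ b := hx.1.trans hx.2
  have hax : f x ≤ f a := hf (left_mem_Icc.2 hab) hx hx.1
  have hxb : f b ≤ f x := hf hx (right_mem_Icc.2 hab) hx.2
  rw [abs_of_nonneg (sub_nonneg.2 hax)]
  exact sub_le_sub_left hxb _

theorem sum_abs_sub_le_of_sum_abs_deriv_le {ι : Type*} (I : Finset ι) {y y' : ι → ℝ → ℝ}
    {D : Set ℝ} {K t s : ℝ} (hD : Convex ℝ D)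
    (hy : ∀ i ∈ I, ∀ τ ∈ D, HasDerivWithinAt (y i) (y' i τ) D τ)
    (hK : ∀ τ ∈ D, ∑ i ∈ I, |y' i τ| ≤ K) (ht : t ∈ D) (hs : s ∈ D) :
    ∑ i ∈ I, |y i t - y i s| ≤ K * |t - s| := by
  -- test the vector of increments against its sign vector
  set ε : ι → ℝ := fun i => SignType.sign (y i t - y i s)
  have hε : ∀ i, |ε i| ≤ 1 := fun i => by
    rcases lt_trichotomy (y i t - y i s) 0 with h | h | h <;> simp [ε, h]
  have hg : ∀ τ ∈ D, HasDerivWithinAt (fun τ => ∑ i ∈ I, ε i * y i τ)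
      (∑ i ∈ I, ε i * y' i τ) D τ := fun τ hτ =>
    HasDerivWithinAt.fun_sum fun i hi => (hy i hi τ hτ).const_mul (ε i)
  have hg' : ∀ τ ∈ D, ‖∑ i ∈ I, ε i * y' i τ‖ ≤ K := fun τ hτ => calc
    ‖∑ i ∈ I, ε i * y' i τ‖ ≤ ∑ i ∈ I, |ε i * y' i τ| := norm_sum_le _ _
    _ ≤ ∑ i ∈ I, |y' i τ| := sum_le_sum fun i _ => by
      rw [abs_mul]
      exact mul_le_of_le_one_left (abs_nonneg _) (hε i)
    _ ≤ K := hK τ hτ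
  calc ∑ i ∈ I, |y i t - y i s|
      = ∑ i ∈ I, ε i * y i t - ∑ i ∈ I, ε i * y i s := by
        simp only [← sum_sub_distrib, ← mul_sub, ε, sign_mul_self]
    _ ≤ ‖∑ i ∈ I, ε i * y i t - ∑ i ∈ I, ε i * y i s‖ := le_abs_self _
    _ ≤ K * |t - s| := hD.norm_image_sub_le_of_norm_hasDerivWithin_le hg hg' hs ht

theorem intervalIntegral_abs_sum_indicator_le {ι : Type*} (I : Finset ι) {μ : Measure ℝ}
    {A : ι → Set ℝ} (hA : ∀ i ∈ I, MeasurableSet (A i)) (hAμ : ∀ i ∈ I, μ (A i) ≠ ⊤)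
    (c : ι → ℝ) (a b : ℝ) :
    ∫ z in a..b, |∑ i ∈ I, (A i).indicator (fun _ => c i) z| ∂μ
      ≤ ∑ i ∈ I, μ.real (A i) * |c i| := by
  have hint : ∀ (d : ι → ℝ), ∀ i ∈ I, Integrable ((A i).indicator fun _ => d i) μ :=
    fun d i hi => (integrable_indicator_iff (hA i hi)).2 (integrableOn_const (hAμ i hi))
  set f : ℝ → ℝ := fun z => ∑ i ∈ I, (A i).indicator (fun _ => c i) z
  have hf : Integrable f μ := integrable_finsetSum I (hint c)
  calc ∫ z in a..b, |f z| ∂μ ≤ ‖∫ z in a..b, |f z| ∂μ‖ := le_abs_self _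
    _ ≤ ∫ z in uIoc a b, ‖|f z|‖ ∂μ := intervalIntegral.norm_integral_le_integral_norm_uIoc
    _ ≤ ∫ z, |f z| ∂μ := by
      simp only [← Real.norm_eq_abs, norm_norm]
      exact setIntegral_le_integral hf.norm (Filter.Eventually.of_forall fun _ => norm_nonneg _)
    _ ≤ ∫ z, ∑ i ∈ I, (A i).indicator (fun _ => |c i|) z ∂μ := by
      refine integral_mono hf.abs (integrable_finsetSum I (hint _)) fun z => ?_
      refine (abs_sum_le_sum_abs _ _).trans_eq (sum_congr rfl fun i _ => ?_)
      simpa only [Real.norm_eq_abs] using norm_indicator_eq_indicator_norm (f := fun _ => c i) z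
    _ = ∑ i ∈ I, μ.real (A i) * |c i| := by
      rw [integral_finsetSum I (hint _)]
      exact sum_congr rfl fun i hi => integral_indicator_const _ (hA i hi)

theorem intervalIntegral_abs_sum_indicator_Ico_le {ℓ : ℝ} (hℓ : 0 ≤ ℓ) (N : ℕ) (c : ℕ → ℝ)
    (a b : ℝ) :
    ∫ z in a..b, |∑ i ∈ range N, (Ico ((i : ℝ) * ℓ) (((i : ℝ) + 1) * ℓ)).indicator
      (fun _ => c i) z| ≤ ℓ * ∑ i ∈ range N, |c i| := by
  refine (intervalIntegral_abs_sum_indicator_le _ (fun _ _ => measurableSet_Ico)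
    (fun _ _ => measure_Ico_lt_top.ne) c a b).trans_eq ?_
  rw [mul_sum]
  refine sum_congr rfl fun i _ => ?_
  rw [Real.volume_real_Ico_of_le (by nlinarith)]
  ring_nf

/-- The last particle sees the empty road `y N = 0` ahead. -/
noncomputable def lagrangianField (ℓ : ℝ) (v : ℝ → ℝ) (N : ℕ) (y : ℕ → ℝ) (i : ℕ) : ℝ :=
  -(y i) ^ 2 / ℓ * (v (if i + 1 < N then y (i + 1) else 0) - v (y i))

theorem hasDerivAt_lagrangianField {N : ℕ} {v : ℝ → ℝ} {ℓ : ℝ} {y : ℕ → ℝ → ℝ}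
    (hODE_last : ∀ t ≥ (0:ℝ),
      HasDerivAt (y (N - 1)) (-(y (N - 1) t) ^ 2 / ℓ * (v 0 - v (y (N - 1) t))) t)
    (hODE : ∀ i, i + 1 < N → ∀ t ≥ (0:ℝ),
      HasDerivAt (y i) (-(y i t) ^ 2 / ℓ * (v (y (i + 1) t) - v (y i t))) t)
    {i : ℕ} (hi : i < N) {t : ℝ} (ht : 0 ≤ t) :
    HasDerivAt (y i) (lagrangianField ℓ v N (fun j => y j t) i) t := by
  unfold lagrangianField
  split_ifs with h
  · exact hODE i h t ht
  · obtain rfl : i = N - 1 := by omega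
    exact hODE_last t ht

theorem sum_abs_lagrangianField_le {N : ℕ} (hN : 1 ≤ N) {ℓ R C : ℝ} (hℓ : 0 < ℓ) {v : ℝ → ℝ}
    (hv : AntitoneOn v (Icc 0 R)) {y : ℕ → ℝ} (hy : ∀ i < N, y i ∈ Icc 0 R)
    (hTV : ∑ i ∈ range (N - 1), |v (y (i + 1)) - v (y i)| ≤ C) :
    ∑ i ∈ range N, |lagrangianField ℓ v N y i| ≤ R ^ 2 / ℓ * (C + (v 0 - v R)) := by
  have hfield : ∀ i < N, |lagrangianField ℓ v N y i|
      ≤ R ^ 2 / ℓ * |v (if i + 1 < N then y (i + 1) else 0) - v (y i)| := fun i hi => by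
    obtain ⟨h0, hR⟩ := hy i hi
    rw [lagrangianField, abs_mul, abs_div, abs_neg, abs_pow, abs_of_nonneg h0, abs_of_pos hℓ]
    gcongr
  obtain ⟨M, rfl⟩ : ∃ M, N = M + 1 := ⟨N - 1, by omega⟩
  rw [Nat.add_sub_cancel] at hTV
  calc ∑ i ∈ range (M + 1), |lagrangianField ℓ v (M + 1) y i|
      ≤ ∑ i ∈ range M, R ^ 2 / ℓ * |v (y (i + 1)) - v (y i)|
        + R ^ 2 / ℓ * |v 0 - v (y M)| := by
        rw [sum_range_succ]
        gcongr with i hi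
        · simpa [show i + 1 < M + 1 by simpa using hi] using hfield i (by simp at hi; omega)
        · simpa using hfield M (by omega)
    _ ≤ R ^ 2 / ℓ * C + R ^ 2 / ℓ * (v 0 - v R) := by
        rw [← mul_sum]
        gcongr
        exact hv.abs_sub_le_of_mem_Icc (hy M (by omega))
    _ = R ^ 2 / ℓ * (C + (v 0 - v R)) := by ring

theorem lagrangian_density_time_continuity_general
    (N : ℕ) (hN : 1 ≤ N) (v : ℝ → ℝ) (ℓ L R δ C : ℝ)
    (hℓ : 0 < ℓ) (hδ : 0 < δ)
    (hv_anti : StrictAntiOn v (Set.Ici 0))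
    (y : ℕ → ℝ → ℝ)
    (hbound : ∀ i < N, ∀ t ≥ (0:ℝ), y i t ∈ Set.Ioc (0:ℝ) R)
    (hODE_last : ∀ t ≥ (0:ℝ),
      HasDerivAt (y (N - 1))
        (-(y (N - 1) t) ^ 2 / ℓ * (v 0 - v (y (N - 1) t))) t)
    (hODE : ∀ i, i + 1 < N → ∀ t ≥ (0:ℝ),
      HasDerivAt (y i)
        (-(y i t) ^ 2 / ℓ * (v (y (i + 1) t) - v (y i t))) t)
    (hTV : ∀ τ ≥ δ,
      ∑ i ∈ Finset.range (N - 1), |v (y (i + 1) τ) - v (y i τ)| ≤ C)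
    (ρcheck : ℝ → ℝ → ℝ)
    (hρcheck : ∀ t z, ρcheck t z = ∑ i ∈ Finset.range N,
      Set.indicator (Set.Ico ((i : ℝ) * ℓ) (((i : ℝ) + 1) * ℓ))
        (fun _ => y i t) z) :
    ∀ t s : ℝ, δ ≤ t → δ ≤ s →
      ∫ z in (0:ℝ)..L, |ρcheck t z - ρcheck s z|
        ≤ R ^ 2 * (C + (v 0 - v R)) * |t - s| := by
  intro t s ht hs
  have hv : AntitoneOn v (Icc 0 R) := hv_anti.antitoneOn.mono Icc_subset_Ici_self
  have hspeed : ∀ τ ∈ Ici δ, ∑ i ∈ range N, |lagrangianField ℓ v N (fun j => y j τ) i|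
      ≤ R ^ 2 / ℓ * (C + (v 0 - v R)) := fun τ hτ =>
    sum_abs_lagrangianField_le hN hℓ hv
      (fun i hi => Ioc_subset_Icc_self (hbound i hi τ (hδ.le.trans hτ))) (hTV τ hτ)
  have hlip := sum_abs_sub_le_of_sum_abs_deriv_le (range N) (convex_Ici δ)
    (fun i hi τ hτ => (hasDerivAt_lagrangianField hODE_last hODE (mem_range.1 hi)
      (hδ.le.trans hτ)).hasDerivWithinAt) hspeed ht hs
  have hdiff : ∀ z, ρcheck t z - ρcheck s z = ∑ i ∈ range N,
      (Ico ((i : ℝ) * ℓ) (((i : ℝ) + 1) * ℓ)).indicator (fun _ => y i t - y i s) z := by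
    simp only [hρcheck, ← sum_sub_distrib, indicator_sub, implies_true]
  calc ∫ z in (0:ℝ)..L, |ρcheck t z - ρcheck s z|
      ≤ ℓ * ∑ i ∈ range N, |y i t - y i s| := by
        simpa only [hdiff] using intervalIntegral_abs_sum_indicator_Ico_le hℓ.le N _ 0 L
    _ ≤ ℓ * (R ^ 2 / ℓ * (C + (v 0 - v R)) * |t - s|) := by gcongr
    _ = R ^ 2 * (C + (v 0 - v R)) * |t - s| := by field_simp

/-- `L¹` time continuity of the discrete Lagrangian density away from `t = 0`. -/
theorem lagrangian_density_time_continuity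
    (N : ℕ) (hN : 1 ≤ N) (v : ℝ → ℝ) (ℓ L R δ C : ℝ)
    (hℓ : 0 < ℓ) (hL : L = N * ℓ) (hR : 0 < R) (hδ : 0 < δ)
    (hv_smooth : ContDiffOn ℝ 1 v (Set.Ici 0))
    (hv_anti : StrictAntiOn v (Set.Ici 0))
    (hV3 : AntitoneOn (fun ρ => ρ * deriv v ρ) (Set.Ici (0:ℝ)))
    (y : ℕ → ℝ → ℝ)
    (hbound : ∀ i < N, ∀ t ≥ (0:ℝ), y i t ∈ Set.Ioc (0:ℝ) R)
    (hODE_last : ∀ t ≥ (0:ℝ),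
      HasDerivAt (y (N - 1))
        (-(y (N - 1) t) ^ 2 / ℓ * (v 0 - v (y (N - 1) t))) t)
    (hODE : ∀ i, i + 1 < N → ∀ t ≥ (0:ℝ),
      HasDerivAt (y i)
        (-(y i t) ^ 2 / ℓ * (v (y (i + 1) t) - v (y i t))) t)
    (hTV : ∀ τ ≥ δ,
      ∑ i ∈ Finset.range (N - 1), |v (y (i + 1) τ) - v (y i τ)| ≤ C)
    (ρcheck : ℝ → ℝ → ℝ)
    (hρcheck : ∀ t z, ρcheck t z = ∑ i ∈ Finset.range N,
      Set.indicator (Set.Ico ((i : ℝ) * ℓ) (((i : ℝ) + 1) * ℓ))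
        (fun _ => y i t) z) :
    ∀ t s : ℝ, δ ≤ t → δ ≤ s →
      ∫ z in (0:ℝ)..L, |ρcheck t z - ρcheck s z|
        ≤ R ^ 2 * (C + (v 0 - v R)) * |t - s| :=
  lagrangian_density_time_continuity_general N hN v ℓ L R δ C hℓ hδ hv_anti y hbound hODE_last hODE
    hTV ρcheck hρcheck
end

section
/- Let k ≥ 0, y, y' > 0, and v strictly decreasing, and set f(ρ) = ρv(ρ). Then the quantity K := sgn(y' − k)·y'·(v(y) − v(y')) + |y − k|v(y) − sgn(y − k)(f(y) − f(k)) − |y' − k|v(y) + sgn(y' − k)(f(y') − f(k)) equals k(v(k) − v(y))(sgn(y − k) − sgn(y' − k)) and is nonnegative. -/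
lemma abs_eq_sign_mul (x : ℝ) : |x| = Real.sign x * x := by
  rcases lt_trichotomy x 0 with h | h | h
  · rw [Real.sign_of_neg h, abs_of_neg h]; ring
  · simp [h]
  · rw [Real.sign_of_pos h, abs_of_pos h]; ring

lemma sign_bounds (x : ℝ) : -1 ≤ Real.sign x ∧ Real.sign x ≤ 1 := by
  rcases lt_trichotomy x 0 with h | h | h
  · rw [Real.sign_of_neg h]; norm_num
  · simp [h]
  · rw [Real.sign_of_pos h]; norm_num

/-- Algebraic identity and sign analysis of the interface term `K_i` in the
discrete Kružkov entropy inequality, with `f ρ = ρ * v ρ`. -/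
theorem entropy_interface_term_nonneg
    (v : ℝ → ℝ) (hv_anti : StrictAntiOn v (Set.Ici 0))
    (f : ℝ → ℝ) (hf : ∀ ρ, f ρ = ρ * v ρ)
    (k y y' : ℝ) (hk : 0 ≤ k) (hy : 0 < y) (hy' : 0 < y')
    (K : ℝ)
    (hK : K = Real.sign (y' - k) * y' * (v y - v y')
        + |y - k| * v y
        - Real.sign (y - k) * (f y - f k)
        - |y' - k| * v y
        + Real.sign (y' - k) * (f y' - f k)) :
    K = k * (v k - v y) * (Real.sign (y - k) - Real.sign (y' - k)) ∧ 0 ≤ K := by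
  have hid : K = k * (v k - v y) * (Real.sign (y - k) - Real.sign (y' - k)) := by
    rw [hK, hf, hf, hf, abs_eq_sign_mul, abs_eq_sign_mul]; ring
  refine ⟨hid, ?_⟩
  rw [hid]
  rcases eq_or_lt_of_le hk with hk0 | hkpos
  · simp [← hk0]
  · rcases lt_trichotomy y k with h | h | h
    · have hs1 : Real.sign (y - k) = -1 := Real.sign_of_neg (by linarith)
      have hv : v k < v y := hv_anti hy.le hk h
      have hs2 := (sign_bounds (y' - k)).1
      rw [hs1]
      have : 0 ≤ (v k - v y) * (-1 - Real.sign (y' - k)) :=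
        mul_nonneg_of_nonpos_of_nonpos (by linarith) (by linarith)
      nlinarith
    · simp [h]
    · have hs1 : Real.sign (y - k) = 1 := Real.sign_of_pos (by linarith)
      have hv : v y < v k := hv_anti hk hy.le h
      have hs2 := (sign_bounds (y' - k)).2
      rw [hs1]
      have : 0 ≤ (v k - v y) * (1 - Real.sign (y' - k)) :=
        mul_nonneg (by linarith) (by linarith)
      nlinarith
end
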